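/- Let B be a symmetric p×p real matrix, S a symmetric positive semidefinite p×p real matrix with square root S^{1/2}, and γ > 0. Then tr[B S^{1/2} (S + γI)⁻¹] is real, and equals the real part of tr[B (S^{1/2} − i√γ I)⁻¹] (matrices regarded over ℂ); moreover the imaginary part of tr[B (S^{1/2} − i√γ I)⁻¹] equals √γ · tr[B (S + γI)⁻¹]. -/
import Mathlib


open Matrix Complex

/-- For symmetric `B`, PSD `S` with PSD square root `R`, `γ > 0`:
`tr[B R (S+γI)⁻¹]` (real) equals `Re tr[B (R − i√γ I)⁻¹]`, and
`Im tr[B (R − i√γ I)⁻¹] = √γ · tr[B (S+γI)⁻¹]`. -/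
theorem trace_real_part_identity (p : ℕ) (B S R : Matrix (Fin p) (Fin p) ℝ)
    (hB : B.IsSymm) (hS : S.PosSemidef) (hR : R.PosSemidef) (hRS : R * R = S)
    (γ : ℝ) (hγ : 0 < γ) :
    let Bc : Matrix (Fin p) (Fin p) ℂ := B.map Complex.ofReal
    let Sc : Matrix (Fin p) (Fin p) ℂ := S.map Complex.ofReal
    let Rc : Matrix (Fin p) (Fin p) ℂ := R.map Complex.ofReal
    (B * R * (S + γ • (1 : Matrix (Fin p) (Fin p) ℝ))⁻¹).trace
       = ((Bc * (Rc - (Complex.I * (Real.sqrt γ : ℂ)) • 1)⁻¹).trace).re ∧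
    ((Bc * (Rc - (Complex.I * (Real.sqrt γ : ℂ)) • 1)⁻¹).trace).im
       = Real.sqrt γ * (B * (S + γ • (1 : Matrix (Fin p) (Fin p) ℝ))⁻¹).trace := by
  intro Bc Sc Rc
  set a : ℂ := Complex.I * (Real.sqrt γ : ℂ) with ha
  set M : Matrix (Fin p) (Fin p) ℝ := S + γ • (1 : Matrix (Fin p) (Fin p) ℝ) with hMdef
  have hM : M.PosDef := by
    refine Matrix.PosDef.posSemidef_add hS ?_
    rw [Matrix.smul_one_eq_diagonal]
    exact Matrix.PosDef.diagonal fun _ => hγ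
  have hMu : IsUnit M.det := hM.det_pos.ne'.isUnit
  have f := (Complex.ofRealHom : ℝ →+* ℂ)
  -- complexified M
  set Mc : Matrix (Fin p) (Fin p) ℂ := M.map Complex.ofReal with hMcdef
  have hMcM : Mc = Sc + (γ : ℂ) • 1 := by
    rw [hMcdef, hMdef]
    ext i j
    simp [Matrix.one_apply, apply_ite (Complex.ofReal), Matrix.add_apply, Sc,
      Matrix.map_apply]
  have hmapmul : ∀ (X Y : Matrix (Fin p) (Fin p) ℝ),
      (X * Y).map Complex.ofReal = X.map Complex.ofReal * Y.map Complex.ofReal :=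
    fun X Y => Matrix.map_mul (f := Complex.ofRealHom)
  have hMinv : Mc * (M⁻¹).map Complex.ofReal = 1 := by
    rw [hMcdef, ← hmapmul, Matrix.mul_nonsing_inv M hMu]
    ext i j
    simp [Matrix.one_apply, apply_ite (Complex.ofReal)]
  have hMcinv : Mc⁻¹ = (M⁻¹).map Complex.ofReal := Matrix.inv_eq_right_inv hMinv
  have ha2 : a * a = -(γ : ℂ) := by
    rw [ha, mul_mul_mul_comm, Complex.I_mul_I, ← Complex.ofReal_mul,
      Real.mul_self_sqrt hγ.le, neg_one_mul]
  have hRc2 : Rc * Rc = Sc := by rw [← hmapmul, hRS]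
  have key : (Rc - a • 1) * ((Rc + a • 1) * Mc⁻¹) = 1 := by
    have expand : (Rc - a • 1) * (Rc + a • 1) = Mc := by
      have hcomm : Commute Rc (a • (1 : Matrix (Fin p) (Fin p) ℂ)) := by
        simpa using (Commute.one_right Rc).smul_right a
      have : (Rc - a • 1) * (Rc + a • 1) = Rc * Rc - (a * a) • 1 := by
        rw [← hcomm.mul_self_sub_mul_self_eq', Matrix.smul_mul, Matrix.mul_smul,
          Matrix.one_mul, smul_smul]
      rw [this, hRc2, ha2, hMcM]
      simp
    rw [← Matrix.mul_assoc, expand, hMcinv, ← hmapmul, Matrix.mul_nonsing_inv M hMu]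
    ext i j
    simp [Matrix.one_apply, apply_ite (Complex.ofReal)]
  have hinv : (Rc - a • 1)⁻¹ = (Rc + a • 1) * Mc⁻¹ := Matrix.inv_eq_right_inv key
  have htr : ∀ (X : Matrix (Fin p) (Fin p) ℝ),
      (X.map Complex.ofReal).trace = ((X.trace : ℝ) : ℂ) := by
    intro X
    simp [Matrix.trace, Matrix.diag, Matrix.map_apply]
  have hexpand : (Bc * (Rc - a • 1)⁻¹).trace
      = ((B * R * M⁻¹).trace : ℂ) + a * ((B * M⁻¹).trace : ℂ) := by
    rw [hinv, Matrix.add_mul, Matrix.smul_mul, Matrix.one_mul, Matrix.mul_add,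
      Matrix.mul_smul, Matrix.trace_add, Matrix.trace_smul]
    have h1 : Bc * Rc * Mc⁻¹ = (B * R * M⁻¹).map Complex.ofReal := by
      rw [hMcinv, hmapmul, hmapmul]
    have h2 : Bc * Mc⁻¹ = (B * M⁻¹).map Complex.ofReal := by
      rw [hMcinv, hmapmul]
    rw [← Matrix.mul_assoc, h1, h2, htr, htr, smul_eq_mul]
  constructor
  · rw [hexpand]
    simp [ha]
  · rw [hexpand]
    simp [ha]
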